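/- Fix α ∈ ℝ and vectors a, c ∈ ℂⁿ, and set V₀(λ) = −2iλ²Σ + 2λQ(a) − i Q(c) Σ − i Q(a)² Σ. Then the boundary constraint K(λ) V₀(−λ) = V₀(λ) K(λ) holds for all λ ∈ ℂ with λ ≠ ±iα if and only if c = 2α a. Consequently, for a field r(x,t), the boundary matrix K(λ) = diag(f_α(λ)Iₙ, 1) satisfies K(λ)V(−λ)|_{x=0} = V(λ)|_{x=0}K(λ) for all admissible λ and all t if and only if r satisfies the homogeneous vector Robin boundary condition ∂ₓr(0,t) = 2α r(0,t). -/

import Mathlib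

open Complex Matrix

noncomputable section

def pdx (f : ℝ × ℝ → ℂ) : ℝ × ℝ → ℂ := fun p => deriv (fun x => f (x, p.2)) p.1

def Sig (n : ℕ) : Matrix (Fin (n+1)) (Fin (n+1)) ℂ :=
  Matrix.diagonal (fun i => if i = Fin.last n then -1 else 1)

def Qm {n : ℕ} (a : Fin n → ℂ) : Matrix (Fin (n+1)) (Fin (n+1)) ℂ :=
  Matrix.of fun i j =>
    if hi : i = Fin.last n then
      (if hj : j = Fin.last n then 0 else -(starRingEnd ℂ) (a (j.castPred hj)))
    else
      (if _ : j = Fin.last n then a (i.castPred hi) else 0)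

/-- The `t`-part of the Lax pair at the boundary, built from `a = r(0,t)` and `c = ∂ₓr(0,t)`. -/
def V0 {n : ℕ} (a c : Fin n → ℂ) (lam : ℂ) : Matrix (Fin (n+1)) (Fin (n+1)) ℂ :=
  (-2 * Complex.I * lam ^ 2) • Sig n + (2 * lam) • Qm a
    - Complex.I • (Qm c * Sig n) - Complex.I • (Qm a * Qm a * Sig n)

def fRobin (α : ℝ) (lam : ℂ) : ℂ := (Complex.I * α + lam) / (Complex.I * α - lam)

/-- The Robin boundary matrix `K(λ) = diag(f_α(λ) Iₙ, 1)`. -/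
def Kmat (n : ℕ) (α : ℝ) (lam : ℂ) : Matrix (Fin (n+1)) (Fin (n+1)) ℂ :=
  Matrix.diagonal (fun i => if i = Fin.last n then 1 else fRobin α lam)

section helpers
variable {n : ℕ} (a c : Fin n → ℂ) (lam : ℂ)

lemma Qm_cs_last (i : Fin n) : Qm a i.castSucc (Fin.last n) = a i := by
  simp [Qm, (Fin.castSucc_lt_last i).ne]

lemma Qm_last_cs (j : Fin n) : Qm a (Fin.last n) j.castSucc = -(starRingEnd ℂ) (a j) := by
  simp [Qm, (Fin.castSucc_lt_last j).ne]

lemma Qm_last_last : Qm a (Fin.last n) (Fin.last n) = 0 := by simp [Qm]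

lemma Qm_cs_cs (i j : Fin n) : Qm a i.castSucc j.castSucc = 0 := by
  simp [Qm, (Fin.castSucc_lt_last i).ne, (Fin.castSucc_lt_last j).ne]

lemma mulSig (M : Matrix (Fin (n+1)) (Fin (n+1)) ℂ) (i j : Fin (n+1)) :
    (M * Sig n) i j = M i j * (if j = Fin.last n then (-1:ℂ) else 1) := by
  rw [Sig, Matrix.mul_diagonal]

lemma QQ_cs_last (i : Fin n) : (Qm a * Qm a) i.castSucc (Fin.last n) = 0 := by
  rw [Matrix.mul_apply, Fin.sum_univ_castSucc]
  simp [Qm_cs_cs, Qm_cs_last, Qm_last_last]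

lemma QQ_last_cs (j : Fin n) : (Qm a * Qm a) (Fin.last n) j.castSucc = 0 := by
  rw [Matrix.mul_apply, Fin.sum_univ_castSucc]
  simp [Qm_cs_cs, Qm_last_cs, Qm_last_last]

lemma V0_cs_last (i : Fin n) :
    V0 a c lam i.castSucc (Fin.last n) = 2 * lam * a i + Complex.I * c i := by
  simp only [V0, Matrix.sub_apply, Matrix.add_apply, Matrix.smul_apply, smul_eq_mul,
    mulSig, Qm_cs_last, QQ_cs_last, Sig, Matrix.diagonal_apply_ne _ (Fin.castSucc_lt_last i).ne]
  simp [Qm_cs_last, QQ_cs_last]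

lemma V0_last_cs (j : Fin n) :
    V0 a c lam (Fin.last n) j.castSucc
      = -(2 * lam) * (starRingEnd ℂ) (a j) + Complex.I * (starRingEnd ℂ) (c j) := by
  simp only [V0, Matrix.sub_apply, Matrix.add_apply, Matrix.smul_apply, smul_eq_mul,
    mulSig, Qm_last_cs, QQ_last_cs, Sig,
    Matrix.diagonal_apply_ne _ (Fin.castSucc_lt_last j).ne.symm]
  simp [Qm_last_cs, QQ_last_cs, (Fin.castSucc_lt_last j).ne]

lemma V0_neg_diag (i j : Fin (n+1)) (h : Qm a i j = 0) :
    V0 a c (-lam) i j = V0 a c lam i j := by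
  simp only [V0, Matrix.sub_apply, Matrix.add_apply, Matrix.smul_apply, smul_eq_mul, h]
  ring

lemma one_ne_Ia (α : ℝ) : (1 : ℂ) ≠ Complex.I * α := by
  intro h; have := congrArg Complex.re h; simp at this

lemma key (α : ℝ) (a c : Fin n → ℂ) :
    (∀ lam : ℂ, lam ≠ Complex.I * α → lam ≠ -(Complex.I * α) →
        Kmat n α lam * V0 a c (-lam) = V0 a c lam * Kmat n α lam)
      ↔ c = fun j => 2 * (α : ℂ) * a j := by
  constructor
  · intro h
    have h2 : (1 : ℂ) ≠ -(Complex.I * α) := by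
      intro h'; have := congrArg Complex.re h'; simp at this
    have hm := h 1 (one_ne_Ia α) h2
    funext j
    have hij := congrFun (congrFun hm j.castSucc) (Fin.last n)
    rw [Kmat, Matrix.diagonal_mul, Matrix.mul_diagonal, V0_cs_last, V0_cs_last] at hij
    simp only [(Fin.castSucc_lt_last j).ne, if_false, if_true, if_pos rfl, mul_one] at hij
    have hd : Complex.I * α - 1 ≠ 0 := sub_ne_zero.mpr (Ne.symm (one_ne_Ia α))
    rw [fRobin, div_mul_eq_mul_div, div_eq_iff hd] at hij
    linear_combination (-(Complex.I)/2) * hij + ((c j) - 2*(α:ℂ)*(a j)) * Complex.I_sq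
  · intro hc lam h1 _
    have hd : Complex.I * α - lam ≠ 0 := sub_ne_zero.mpr (Ne.symm h1)
    subst hc
    ext i j
    rw [Kmat, Matrix.diagonal_mul, Matrix.mul_diagonal]
    induction i using Fin.lastCases with
    | last =>
      induction j using Fin.lastCases with
      | last =>
        rw [V0_neg_diag _ _ _ _ _ (Qm_last_last a)]
        simp
      | cast j =>
        rw [V0_last_cs, V0_last_cs]
        simp only [(Fin.castSucc_lt_last j).ne, if_false, if_pos rfl, one_mul, eq_self_iff_true, ↓reduceIte,
          _root_.map_mul, map_ofNat, Complex.conj_ofReal]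
        rw [fRobin]
        field_simp
        ring
    | cast i =>
      induction j using Fin.lastCases with
      | last =>
        rw [V0_cs_last, V0_cs_last]
        simp only [(Fin.castSucc_lt_last i).ne, if_false, if_pos rfl, mul_one, eq_self_iff_true, ↓reduceIte]
        rw [fRobin]
        field_simp
        ring
      | cast j =>
        rw [V0_neg_diag _ _ _ _ _ (Qm_cs_cs a i j)]
        simp only [(Fin.castSucc_lt_last i).ne, (Fin.castSucc_lt_last j).ne, if_false]
        ring

end helpers

theorem stmt5 {n : ℕ} (α : ℝ) (a c : Fin n → ℂ) :
    ((∀ lam : ℂ, lam ≠ Complex.I * α → lam ≠ -(Complex.I * α) →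
        Kmat n α lam * V0 a c (-lam) = V0 a c lam * Kmat n α lam)
      ↔ c = fun j => 2 * (α : ℂ) * a j) ∧
    ∀ r : ℝ × ℝ → Fin n → ℂ,
      ((∀ (t : ℝ) (lam : ℂ), lam ≠ Complex.I * α → lam ≠ -(Complex.I * α) →
          Kmat n α lam * V0 (r (0, t)) (fun ℓ => pdx (fun q => r q ℓ) (0, t)) (-lam)
            = V0 (r (0, t)) (fun ℓ => pdx (fun q => r q ℓ) (0, t)) lam * Kmat n α lam)
        ↔ ∀ (t : ℝ) (ℓ : Fin n),
            pdx (fun q => r q ℓ) (0, t) = 2 * (α : ℂ) * r (0, t) ℓ) := by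
  refine ⟨key α a c, fun r => ⟨fun h t ℓ => ?_, fun h t lam h1 h2 => ?_⟩⟩
  · exact congrFun ((key α (r (0,t)) _).mp (fun lam h1 h2 => h t lam h1 h2)) ℓ
  · exact (key α (r (0,t)) _).mpr (funext fun ℓ => h t ℓ) lam h1 h2
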